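/- Define Π(x) = √((4-x)/(1-x)) - 2 and g_θ(x) = 1 - 3/((√((4-x)/(1-x)) + 1)² - 1) for x ∈ [0,1). Then g_θ(0) = 5/8, Π(g_θ(0)) = 1, and for every x ∈ [0,1): Π(g_θ(x)) - Π(g_θ(0)) = Π(x). -/

import Mathlib

/-!
Writing `s = √((4 - x)/(1 - x))`, we have `g_θ(x) = 1 - 3/(u - 1)` with `u = (s + 1)²`, and the
Möbius map `g ↦ (4 - g)/(1 - g)` inverts `u ↦ 1 - 3/(u - 1)`. Hence `Π(g_θ(x)) = (s + 1) - 2 = Π(x) + 1`,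
and `Π(0) = 0`.
-/

/-- Generating function of the stationary measure. -/
noncomputable def PiFun (x : ℝ) : ℝ := Real.sqrt ((4 - x) / (1 - x)) - 2

/-- The offspring generating function of the skeleton decomposition. -/
noncomputable def gTheta (x : ℝ) : ℝ :=
  1 - 3 / ((Real.sqrt ((4 - x) / (1 - x)) + 1) ^ 2 - 1)

lemma four_sub_div_one_sub_of_one_sub_three_div {u : ℝ} (hu : u ≠ 1) :
    (4 - (1 - 3 / (u - 1))) / (1 - (1 - 3 / (u - 1))) = u := by
  have hu' : u - 1 ≠ 0 := sub_ne_zero.mpr hu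
  field_simp
  ring

lemma sqrt_four_sub_div_one_sub_pos {x : ℝ} (hx : x < 1) :
    0 < Real.sqrt ((4 - x) / (1 - x)) :=
  Real.sqrt_pos.mpr (div_pos (by linarith) (by linarith))

lemma PiFun_gTheta {x : ℝ} (hx : x < 1) : PiFun (gTheta x) = PiFun x + 1 := by
  set s := Real.sqrt ((4 - x) / (1 - x)) with hs
  have hs_pos : 0 < s := sqrt_four_sub_div_one_sub_pos hx
  have hu : (s + 1) ^ 2 ≠ 1 := by nlinarith
  rw [PiFun, gTheta, ← hs, four_sub_div_one_sub_of_one_sub_three_div hu,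
    Real.sqrt_sq (by linarith), PiFun, ← hs]
  ring

lemma sqrt_four_sub_div_one_sub_zero : Real.sqrt ((4 - 0) / (1 - 0)) = (2 : ℝ) := by
  rw [show ((4 : ℝ) - 0) / (1 - 0) = 2 ^ 2 by norm_num, Real.sqrt_sq zero_le_two]

lemma PiFun_zero : PiFun 0 = 0 := by
  rw [PiFun, sqrt_four_sub_div_one_sub_zero, sub_self]

lemma gTheta_zero : gTheta 0 = 5 / 8 := by
  rw [gTheta, sqrt_four_sub_div_one_sub_zero]
  norm_num

theorem stmt_7 :
    gTheta 0 = 5 / 8 ∧ PiFun (gTheta 0) = 1 ∧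
      ∀ x ∈ Set.Ico (0 : ℝ) 1, PiFun (gTheta x) - PiFun (gTheta 0) = PiFun x := by
  have hPi_gTheta_zero : PiFun (gTheta 0) = 1 := by
    rw [PiFun_gTheta zero_lt_one, PiFun_zero, zero_add]
  refine ⟨gTheta_zero, hPi_gTheta_zero, fun x hx => ?_⟩
  rw [PiFun_gTheta hx.2, hPi_gTheta_zero, add_sub_cancel_right]
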